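/- Let G_{ij} : ℝ → ℝ (1 ≤ i, j ≤ n) be functions such that each reciprocal 1/G_{ij} is an escort (so each G_{ij} is strictly positive and 1/G_{ij} is nondecreasing on (0,1]). Define (log G)_{ij}(x) = ∫_1^x G_{ij}(v) dv and, for x̂, x with all components in (0,1], D_G(x̂‖x) = Σ_{i,j} ∫_{x_i}^{x̂_i} ((log G)_{ij}(v) − (log G)_{ij}(x_i)) dv. Then D_G is an information divergence: D_G(x̂‖x̂) = 0 and D_G(x̂‖x) > 0 for all x ≠ x̂. -/
import Mathlib


open scoped BigOperators

/-- An escort: a real function that is nondecreasing and strictly positive on `(0,1]`. -/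
def IsEscort (φ : ℝ → ℝ) : Prop :=
  MonotoneOn φ (Set.Ioc (0:ℝ) 1) ∧ ∀ x ∈ Set.Ioc (0:ℝ) 1, 0 < φ x

/-- The escort logarithm `log_φ(x) = ∫_1^x dv / φ(v)`. -/
noncomputable def escortLog (φ : ℝ → ℝ) (x : ℝ) : ℝ :=
  ∫ v in (1:ℝ)..x, 1 / φ v

/-- The escort divergence
`D_φ(x, y) = Σ_i ∫_{y_i}^{x_i} (log_{φ_i}(u) − log_{φ_i}(y_i)) du`. -/
noncomputable def escortDiv {n : ℕ} (φ : Fin n → ℝ → ℝ) (x y : Fin n → ℝ) : ℝ :=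
  ∑ i, ∫ u in (y i)..(x i), (escortLog (φ i) u - escortLog (φ i) (y i))

/-- The metric logarithm `(log G)_{ij}(x) = ∫_1^x G_{ij}(v) dv`. -/
noncomputable def metricLog (g : ℝ → ℝ) (x : ℝ) : ℝ :=
  ∫ v in (1:ℝ)..x, g v

/-- The divergence `D_G(x̂‖x) = Σ_{i,j} ∫_{x_i}^{x̂_i} ((log G)_{ij}(v) − (log G)_{ij}(x_i)) dv`
associated to a Riemannian metric `G`. -/
noncomputable def metricDiv {n : ℕ} (G : Fin n → Fin n → ℝ → ℝ)
    (xhat x : Fin n → ℝ) : ℝ :=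
  ∑ i, ∑ j, ∫ v in (x i)..(xhat i), (metricLog (G i j) v - metricLog (G i j) (x i))

lemma gpos {g : ℝ → ℝ} (hg : IsEscort fun u => (g u)⁻¹) :
    ∀ u ∈ Set.Ioc (0:ℝ) 1, 0 < g u := fun u hu => inv_pos.mp (hg.2 u hu)

lemma ganti {g : ℝ → ℝ} (hg : IsEscort fun u => (g u)⁻¹) :
    AntitoneOn g (Set.Ioc (0:ℝ) 1) := by
  intro u hu v hv huv
  have h := hg.1 hu hv huv
  have h2 := inv_anti₀ (hg.2 u hu) h
  simpa using h2

lemma uicc_sub {a b : ℝ} (ha : a ∈ Set.Ioc (0:ℝ) 1) (hb : b ∈ Set.Ioc (0:ℝ) 1) :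
    Set.uIcc a b ⊆ Set.Ioc (0:ℝ) 1 := Set.ordConnected_Ioc.uIcc_subset ha hb

lemma gInt {g : ℝ → ℝ} (hg : IsEscort fun u => (g u)⁻¹)
    {a b : ℝ} (ha : a ∈ Set.Ioc (0:ℝ) 1) (hb : b ∈ Set.Ioc (0:ℝ) 1) :
    IntervalIntegrable g MeasureTheory.volume a b :=
  ((ganti hg).mono (uicc_sub ha hb)).intervalIntegrable

lemma L_sub {g : ℝ → ℝ} (hg : IsEscort fun u => (g u)⁻¹)
    {a b : ℝ} (ha : a ∈ Set.Ioc (0:ℝ) 1) (hb : b ∈ Set.Ioc (0:ℝ) 1) :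
    metricLog g b - metricLog g a = ∫ v in a..b, g v := by
  have h1 : IntervalIntegrable g MeasureTheory.volume 1 a :=
    gInt hg (by norm_num) ha
  have h2 := gInt hg ha hb
  have := intervalIntegral.integral_add_adjacent_intervals h1 h2
  unfold metricLog
  linarith

lemma L_lt {g : ℝ → ℝ} (hg : IsEscort fun u => (g u)⁻¹)
    {a b : ℝ} (ha : a ∈ Set.Ioc (0:ℝ) 1) (hb : b ∈ Set.Ioc (0:ℝ) 1) (hab : a < b) :
    metricLog g a < metricLog g b := by
  have hpos : 0 < ∫ v in a..b, g v := by
    apply intervalIntegral.intervalIntegral_pos_of_pos_on (gInt hg ha hb)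
      (fun x hx => gpos hg x ⟨ha.1.trans hx.1, hx.2.le.trans hb.2⟩) hab
  have := L_sub hg ha hb
  linarith

lemma L_mono {g : ℝ → ℝ} (hg : IsEscort fun u => (g u)⁻¹) :
    MonotoneOn (metricLog g) (Set.Ioc (0:ℝ) 1) := by
  intro a ha b hb hab
  rcases eq_or_lt_of_le hab with h | h
  · rw [h]
  · exact (L_lt hg ha hb h).le

lemma main_pos {g : ℝ → ℝ} (hg : IsEscort fun u => (g u)⁻¹)
    {a b : ℝ} (ha : a ∈ Set.Ioc (0:ℝ) 1) (hb : b ∈ Set.Ioc (0:ℝ) 1) (hab : a ≠ b) :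
    0 < ∫ v in a..b, (metricLog g v - metricLog g a) := by
  have LInt : ∀ {c d : ℝ}, c ∈ Set.Ioc (0:ℝ) 1 → d ∈ Set.Ioc (0:ℝ) 1 →
      IntervalIntegrable (fun v => metricLog g v - metricLog g a)
        MeasureTheory.volume c d := fun hc hd =>
    (((L_mono hg).mono (uicc_sub hc hd)).intervalIntegrable).sub intervalIntegrable_const
  rcases hab.lt_or_gt with h | h
  · exact intervalIntegral.intervalIntegral_pos_of_pos_on (LInt ha hb)
      (fun x hx => sub_pos.mpr (L_lt hg ha ⟨ha.1.trans hx.1, hx.2.le.trans hb.2⟩ hx.1)) h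
  · have key : 0 < ∫ v in b..a, (metricLog g a - metricLog g v) := by
      apply intervalIntegral.intervalIntegral_pos_of_pos_on
      · exact intervalIntegrable_const.sub
          (((L_mono hg).mono (uicc_sub hb ha)).intervalIntegrable)
      · exact fun x hx => sub_pos.mpr (L_lt hg ⟨hb.1.trans hx.1, hx.2.le.trans ha.2⟩ ha hx.2)
      · exact h
    have e1 : (∫ v in b..a, (metricLog g a - metricLog g v))
        = - ∫ v in b..a, (metricLog g v - metricLog g a) := by
      rw [← intervalIntegral.integral_neg]
      congr 1; funext v; ring
    rw [intervalIntegral.integral_symm]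
    linarith

/-- if the reciprocal of each component `G_{ij}` is an escort, then
`D_G` is an information divergence: `D_G(x̂‖x̂) = 0` and `D_G(x̂‖x) > 0` for `x ≠ x̂`. -/
theorem metricDiv_is_divergence {n : ℕ}
    (G : Fin n → Fin n → ℝ → ℝ)
    (hG : ∀ i j, IsEscort (fun u => (G i j u)⁻¹))
    (xhat : Fin n → ℝ) (hxhat : ∀ i, xhat i ∈ Set.Ioc (0:ℝ) 1) :
    metricDiv G xhat xhat = 0 ∧
      ∀ x : Fin n → ℝ, (∀ i, x i ∈ Set.Ioc (0:ℝ) 1) → x ≠ xhat →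
        0 < metricDiv G xhat x := by
  constructor
  · simp [metricDiv, intervalIntegral.integral_same]
  · intro x hx hne
    obtain ⟨i0, hi0⟩ : ∃ i, x i ≠ xhat i := by
      by_contra h
      push_neg at h
      exact hne (funext h)
    have term_nonneg : ∀ i j, 0 ≤ ∫ v in (x i)..(xhat i),
        (metricLog (G i j) v - metricLog (G i j) (x i)) := by
      intro i j
      rcases eq_or_ne (x i) (xhat i) with h | h
      · rw [h, intervalIntegral.integral_same]
      · exact (main_pos (hG i j) (hx i) (hxhat i) h).le
    have inner_nonneg : ∀ i, 0 ≤ ∑ j, ∫ v in (x i)..(xhat i),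
        (metricLog (G i j) v - metricLog (G i j) (x i)) :=
      fun i => Finset.sum_nonneg fun j _ => term_nonneg i j
    have inner_pos : 0 < ∑ j, ∫ v in (x i0)..(xhat i0),
        (metricLog (G i0 j) v - metricLog (G i0 j) (x i0)) := by
      apply Finset.sum_pos
      · exact fun j _ => main_pos (hG i0 j) (hx i0) (hxhat i0) hi0
      · exact ⟨i0, Finset.mem_univ i0⟩
    exact Finset.sum_pos' (fun i _ => inner_nonneg i) ⟨i0, Finset.mem_univ i0, inner_pos⟩
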